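/- Let s ≥ 0. There exists a constant C_s > 0 such that for every δ > 0 and every square-summable sequence a : ℤ → ℂ, ( ∑_{n∈ℤ, n≠0} ⟨n⟩^{2s} |n(coth(δn) − sgn(n))|² |a(n)|² )^{1/2} ≤ C_s · δ^{−1} · (1 + δ^{−s}) · ( ∑_{n∈ℤ} |a(n)|² )^{1/2}. Equivalently, for every f ∈ L²(𝕋), writing f̂(n) for its Fourier coefficients, the operator Q_δ with Fourier multiplier symbol q_δ(n) = n(coth(δn) − sgn(n)) for n ≠ 0 and q_δ(0) = 0 satisfies ( ∑_{n∈ℤ} ⟨n⟩^{2s} |q_δ(n) f̂(n)|² )^{1/2} ≤ C_s · δ^{−1} · (1 + δ^{−s}) · ( ∑_{n∈ℤ} |f̂(n)|² )^{1/2}. -/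

import Mathlib

/-!
Since `coth x - 1 = 2 / (e^{2x} - 1)`, the symbol is `q_δ(n) = 2n / (e^{2δn} - 1)` for `n > 0`
and is even in `n`. With `m = ⌈s⌉ + 1`, the Taylor bound `x^{s+1} ≤ m! (eˣ - 1)` at `x = 2δn`,
together with `⟨n⟩ ≤ 2n`, gives `⟨n⟩^s q_δ(n) ≤ m! δ^{-(s+1)}` uniformly in `n`, so `Q_δ` is a
bounded multiplier on `ℓ²`. Fourier coefficients of `f ∈ L²(𝕋)` lie in `ℓ²` by Parseval.
-/

/-- The hyperbolic cotangent `coth x = (eˣ + e⁻ˣ)/(eˣ − e⁻ˣ)`, for `x ≠ 0`. -/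
noncomputable def cothR (x : ℝ) : ℝ :=
  (Real.exp x + Real.exp (-x)) / (Real.exp x - Real.exp (-x))

/-- The symbol `q_δ(n) = n (coth(δn) − sgn n)` of the operator `Q_δ = (T_δ − H)∂ₓ`,
with the convention `q_δ(0) = 0`. -/
noncomputable def qSym (δ : ℝ) (n : ℤ) : ℝ :=
  if n = 0 then 0 else (n : ℝ) * (cothR (δ * n) - Real.sign n)

/-- The `n`-th Fourier coefficient of a (2π-periodic) function `f : ℝ → ℂ`:
`f̂(n) = (2π)⁻¹ ∫_0^{2π} e^{−inx} f(x) dx`. -/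
noncomputable def fCoef (f : ℝ → ℂ) (n : ℤ) : ℂ :=
  (1 / (2 * (Real.pi : ℂ))) * ∫ x in (0 : ℝ)..(2 * Real.pi), Complex.exp (-Complex.I * n * x) * f x

open Real Nat

lemma cothR_neg (x : ℝ) : cothR (-x) = -cothR x := by
  rw [cothR, cothR, neg_neg, ← div_neg, neg_sub, add_comm]

lemma cothR_sub_one {x : ℝ} (hx : x ≠ 0) : cothR x - 1 = 2 / (exp (2 * x) - 1) := by
  have hsub : exp x - exp (-x) ≠ 0 :=
    sub_ne_zero.mpr (exp_injective.ne (by contrapose! hx; linarith))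
  have hsub2 : exp (2 * x) - 1 ≠ 0 := sub_ne_zero.mpr (by simpa using hx)
  rw [cothR, div_sub_one hsub, div_eq_div_iff hsub hsub2, two_mul, exp_add, exp_neg]
  field_simp
  ring

lemma qSym_neg (δ : ℝ) (n : ℤ) : qSym δ (-n) = qSym δ n := by
  rcases eq_or_ne n 0 with rfl | hn
  · rfl
  · rw [qSym, qSym, if_neg (neg_ne_zero.mpr hn), if_neg hn, Int.cast_neg, mul_neg, cothR_neg,
      Real.sign_neg]
    ring

lemma qSym_abs (δ : ℝ) (n : ℤ) : qSym δ |n| = qSym δ n := by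
  rcases abs_choice n with h | h <;> rw [h]
  exact qSym_neg δ n

lemma qSym_of_pos {δ : ℝ} (hδ : δ ≠ 0) {n : ℤ} (hn : 0 < n) :
    qSym δ n = 2 * n / (exp (2 * δ * n) - 1) := by
  have hn' : (0 : ℝ) < n := Int.cast_pos.mpr hn
  rw [qSym, if_neg hn.ne', Real.sign_of_pos hn', cothR_sub_one (mul_ne_zero hδ hn'.ne'),
    mul_assoc, mul_div_assoc']
  ring

lemma exp_sub_one_pos {x : ℝ} (hx : 0 < x) : 0 < exp x - 1 :=
  sub_pos.mpr (one_lt_exp_iff.mpr hx)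

lemma qSym_pos {δ : ℝ} (hδ : 0 < δ) {n : ℤ} (hn : 0 < n) : 0 < qSym δ n := by
  have hn' : (0 : ℝ) < n := Int.cast_pos.mpr hn
  rw [qSym_of_pos hδ.ne' hn]
  have := exp_sub_one_pos (by positivity : 0 < 2 * δ * n)
  positivity

lemma pow_div_factorial_le_exp_sub_one {x : ℝ} (hx : 0 ≤ x) {m : ℕ} (hm : m ≠ 0) :
    x ^ m / m ! ≤ exp x - 1 := by
  obtain ⟨k, rfl⟩ := exists_eq_add_one_of_ne_zero hm
  have hsum := sum_le_exp_of_nonneg hx (k + 2)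
  rw [Finset.sum_range_succ', Finset.sum_range_succ] at hsum
  have hrest : 0 ≤ ∑ i ∈ Finset.range k, x ^ (i + 1) / (i + 1)! :=
    Finset.sum_nonneg fun i _ => by positivity
  simp only [pow_zero, factorial_zero, cast_one, div_one] at hsum
  linarith

lemma rpow_le_factorial_mul_exp_sub_one {x t : ℝ} (hx : 0 ≤ x) {m : ℕ} (ht : 1 ≤ t)
    (htm : t ≤ m) : x ^ t ≤ m ! * (exp x - 1) := by
  have hfac : (1 : ℝ) ≤ m ! := one_le_cast.mpr (factorial_pos m)
  rcases le_total x 1 with hx1 | hx1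
  · calc x ^ t ≤ x ^ (1 : ℝ) := rpow_le_rpow_of_exponent_ge' hx hx1 (by linarith) ht
      _ ≤ exp x - 1 := by rw [rpow_one]; linarith [add_one_le_exp x]
      _ ≤ m ! * (exp x - 1) := le_mul_of_one_le_left (by linarith [add_one_le_exp x]) hfac
  · have hm : m ≠ 0 := by rintro rfl; norm_num at htm; linarith
    calc x ^ t ≤ x ^ (m : ℝ) := rpow_le_rpow_of_exponent_le hx1 htm
      _ ≤ m ! * (exp x - 1) := by
        rw [rpow_natCast, ← div_le_iff₀' (by positivity)]
        exact pow_div_factorial_le_exp_sub_one hx hm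

lemma one_add_sq_rpow_mul_qSym_le {s δ : ℝ} (hs : 0 ≤ s) (hδ : 0 < δ) {n : ℤ} (hn : 0 < n) :
    (1 + (n : ℝ) ^ 2) ^ (s / 2) * qSym δ n ≤ (⌈s⌉₊ + 1)! * δ ^ (-(s + 1)) := by
  have hN : (1 : ℝ) ≤ n := by exact_mod_cast hn
  rw [qSym_of_pos hδ.ne' hn]
  generalize (n : ℝ) = N at hN ⊢
  have hE := exp_sub_one_pos (by positivity : 0 < 2 * δ * N)
  have hweight : (1 + N ^ 2) ^ (s / 2) ≤ (2 * N) ^ s :=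
    calc (1 + N ^ 2) ^ (s / 2) ≤ ((2 * N) ^ 2) ^ (s / 2) := by gcongr; nlinarith
      _ = (2 * N) ^ s := by
        rw [← rpow_natCast, ← rpow_mul (by positivity)]
        congr 1
        ring
  have hexp : (δ * (2 * N)) ^ (s + 1) ≤ (⌈s⌉₊ + 1)! * (exp (2 * δ * N) - 1) := by
    rw [show 2 * δ * N = δ * (2 * N) by ring]
    refine rpow_le_factorial_mul_exp_sub_one (by positivity) (by linarith) ?_
    push_cast
    linarith [le_ceil s]
  calc (1 + N ^ 2) ^ (s / 2) * (2 * N / (exp (2 * δ * N) - 1))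
      = (1 + N ^ 2) ^ (s / 2) * (2 * N) / (exp (2 * δ * N) - 1) := (mul_div_assoc ..).symm
    _ ≤ (2 * N) ^ s * (2 * N) / (exp (2 * δ * N) - 1) := by gcongr
    _ = δ ^ (-(s + 1)) * ((δ * (2 * N)) ^ (s + 1) / (exp (2 * δ * N) - 1)) := by
        rw [← rpow_add_one (by positivity), mul_rpow hδ.le (by positivity), rpow_neg hδ.le]
        field_simp
    _ ≤ δ ^ (-(s + 1)) * (⌈s⌉₊ + 1)! := by
        gcongr
        rwa [div_le_iff₀ hE]
    _ = (⌈s⌉₊ + 1)! * δ ^ (-(s + 1)) := mul_comm _ _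

lemma one_add_sq_rpow_mul_qSym_sq_le {s δ : ℝ} (hs : 0 ≤ s) (hδ : 0 < δ) (n : ℤ) :
    (1 + (n : ℝ) ^ 2) ^ s * qSym δ n ^ 2 ≤ ((⌈s⌉₊ + 1)! * δ ^ (-(s + 1))) ^ 2 := by
  have habs : ((|n| : ℤ) : ℝ) ^ 2 = (n : ℝ) ^ 2 := by push_cast; exact sq_abs _
  rw [← habs, ← qSym_abs]
  rcases (abs_nonneg n).eq_or_lt with h | h
  · rw [← h, qSym, if_pos rfl, zero_pow two_ne_zero, mul_zero]
    positivity
  calc (1 + ((|n| : ℤ) : ℝ) ^ 2) ^ s * qSym δ |n| ^ 2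
      = ((1 + ((|n| : ℤ) : ℝ) ^ 2) ^ (s / 2) * qSym δ |n|) ^ 2 := by
        rw [mul_pow, ← rpow_natCast ((1 + _) ^ (s / 2)) 2, ← rpow_mul (by positivity)]
        norm_num
    _ ≤ ((⌈s⌉₊ + 1)! * δ ^ (-(s + 1))) ^ 2 := by
        have := qSym_pos hδ h
        exact pow_le_pow_left₀ (by positivity) (one_add_sq_rpow_mul_qSym_le hs hδ h) 2

lemma tsum_mul_norm_sq_rpow_le {ι E : Type*} [NormedAddCommGroup E] {w : ι → ℝ} {a : ι → E}
    {B : ℝ} (hB : 0 ≤ B) (hw : ∀ i, 0 ≤ w i) (hwB : ∀ i, w i ≤ B ^ 2)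
    (ha : Summable fun i => ‖a i‖ ^ 2) :
    (∑' i, w i * ‖a i‖ ^ 2) ^ (1 / 2 : ℝ) ≤ B * (∑' i, ‖a i‖ ^ 2) ^ (1 / 2 : ℝ) := by
  have hle : ∀ i, w i * ‖a i‖ ^ 2 ≤ B ^ 2 * ‖a i‖ ^ 2 := fun i => by gcongr; exact hwB i
  have hnonneg : ∀ i, 0 ≤ w i * ‖a i‖ ^ 2 := fun i => mul_nonneg (hw i) (sq_nonneg _)
  have htsum : ∑' i, w i * ‖a i‖ ^ 2 ≤ B ^ 2 * ∑' i, ‖a i‖ ^ 2 := by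
    rw [← tsum_mul_left]
    exact ((ha.mul_left _).of_nonneg_of_le hnonneg hle).tsum_le_tsum hle (ha.mul_left _)
  calc (∑' i, w i * ‖a i‖ ^ 2) ^ (1 / 2 : ℝ)
      ≤ (B ^ 2 * ∑' i, ‖a i‖ ^ 2) ^ (1 / 2 : ℝ) :=
        rpow_le_rpow (tsum_nonneg hnonneg) htsum (by norm_num)
    _ = B * (∑' i, ‖a i‖ ^ 2) ^ (1 / 2 : ℝ) := by
        rw [mul_rpow (by positivity) (tsum_nonneg fun i => by positivity), ← rpow_natCast,
          ← rpow_mul hB]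
        norm_num

lemma fCoef_eq_fourierCoeffOn (f : ℝ → ℂ) : fCoef f = fourierCoeffOn two_pi_pos f := by
  ext n
  rw [fCoef, fourierCoeffOn_eq_integral, sub_zero, Complex.real_smul]
  push_cast
  congr 1
  refine intervalIntegral.integral_congr fun x _ => ?_
  rw [fourier_coe_apply, smul_eq_mul]
  congr 2
  push_cast
  field_simp

lemma summable_norm_fCoef_sq {f : ℝ → ℂ}
    (hf : MeasureTheory.MemLp f 2 (MeasureTheory.volume.restrict (Set.Ioc 0 (2 * π)))) :
    Summable fun n : ℤ => ‖fCoef f n‖ ^ 2 := by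
  rw [fCoef_eq_fourierCoeffOn]
  exact (hasSum_sq_fourierCoeffOn two_pi_pos hf).summable

/-- For every `s ≥ 0` there is `C_s > 0` such that for every `δ > 0`:
(i) for every square-summable sequence `a : ℤ → ℂ`,
`(∑_n ⟨n⟩^{2s} |q_δ(n)|² |a(n)|²)^{1/2} ≤ C_s δ⁻¹ (1 + δ^{−s}) (∑_n |a(n)|²)^{1/2}`;
(ii) for every `f ∈ L²(𝕋)`, the same bound holds with `a(n) = f̂(n)`. -/
theorem stmt3 (s : ℝ) (hs : 0 ≤ s) :
    ∃ C : ℝ, 0 < C ∧ ∀ δ : ℝ, 0 < δ →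
      (∀ a : ℤ → ℂ, Summable (fun n : ℤ => ‖a n‖ ^ 2) →
        (∑' n : ℤ, (1 + (n : ℝ) ^ 2) ^ s * qSym δ n ^ 2 * ‖a n‖ ^ 2) ^ ((1 : ℝ) / 2) ≤
          C * δ⁻¹ * (1 + δ ^ (-s)) * (∑' n : ℤ, ‖a n‖ ^ 2) ^ ((1 : ℝ) / 2)) ∧
      (∀ f : ℝ → ℂ, Function.Periodic f (2 * Real.pi) →
        MeasureTheory.MemLp f 2
          (MeasureTheory.volume.restrict (Set.Ioc (0 : ℝ) (2 * Real.pi))) →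
        (∑' n : ℤ, (1 + (n : ℝ) ^ 2) ^ s * qSym δ n ^ 2 * ‖fCoef f n‖ ^ 2) ^ ((1 : ℝ) / 2) ≤
          C * δ⁻¹ * (1 + δ ^ (-s)) * (∑' n : ℤ, ‖fCoef f n‖ ^ 2) ^ ((1 : ℝ) / 2)) := by
  refine ⟨(⌈s⌉₊ + 1)!, by positivity, fun δ hδ => ?_⟩
  have hδs : δ ^ (-(s + 1)) ≤ δ⁻¹ * (1 + δ ^ (-s)) := by
    rw [neg_add', sub_eq_add_neg, rpow_add hδ, rpow_neg_one, mul_comm]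
    gcongr
    exact le_add_of_nonneg_left zero_le_one
  have hweight (n : ℤ) :
      (1 + (n : ℝ) ^ 2) ^ s * qSym δ n ^ 2 ≤ ((⌈s⌉₊ + 1)! * δ⁻¹ * (1 + δ ^ (-s))) ^ 2 := by
    refine (one_add_sq_rpow_mul_qSym_sq_le hs hδ n).trans ?_
    rw [mul_assoc]
    gcongr
  have hbound (a : ℤ → ℂ) (ha : Summable fun n : ℤ => ‖a n‖ ^ 2) :=
    tsum_mul_norm_sq_rpow_le (by positivity) (fun n => by positivity) hweight ha
  exact ⟨hbound, fun f _ hf => hbound _ (summable_norm_fCoef_sq hf)⟩
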